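/- There exists a lattice Λ in ℝ^n possessing a Minkowskian sublattice Λ' with Λ/Λ' cyclic of order 3 if and only if n ≥ 6. (For n ≥ 6 one may take e₁, …, eₙ with N(eᵢ) = 1 and eᵢ·eⱼ = 1/5 for i ≠ j, and Λ = ⟨Λ', (e₁ + … + eₙ)/3⟩; for n ≤ 5 no lattice admits such a sublattice, by Watson's inequality.) -/

import Mathlib

open scoped BigOperators RealInnerProductSpace

noncomputable section

/-- The minimum of a lattice `Λ` in `ℝⁿ`: the infimum of the squared Euclidean
lengths `N(x) = ⟪x, x⟫` of the nonzero vectors of `Λ`. -/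
def latticeMin {n : ℕ} (Λ : Submodule ℤ (EuclideanSpace ℝ (Fin n))) : ℝ :=
  sInf {r : ℝ | ∃ x ∈ Λ, x ≠ 0 ∧ ⟪x, x⟫ = r}

/-- The set of minimal vectors of a lattice `Λ`:
`S(Λ) = {x ∈ Λ : x ≠ 0, N(x) = min Λ}`. -/
def minimalVectors {n : ℕ} (Λ : Submodule ℤ (EuclideanSpace ℝ (Fin n))) :
    Set (EuclideanSpace ℝ (Fin n)) :=
  {x | x ∈ Λ ∧ x ≠ 0 ∧ ⟪x, x⟫ = latticeMin Λ}

/-- `Λ` is a (full-rank) lattice in `ℝⁿ`: a discrete subgroup that spans `ℝⁿ`. -/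
def IsLattice {n : ℕ} (Λ : Submodule ℤ (EuclideanSpace ℝ (Fin n))) : Prop :=
  DiscreteTopology Λ ∧ Submodule.span ℝ (Λ : Set (EuclideanSpace ℝ (Fin n))) = ⊤

/-- `Λ'` is a Minkowskian sublattice of `Λ`: it is generated by `n` linearly
independent minimal vectors of `Λ`. -/
def IsMinkowskian {n : ℕ} (Λ Λ' : Submodule ℤ (EuclideanSpace ℝ (Fin n))) : Prop :=
  ∃ e : Fin n → EuclideanSpace ℝ (Fin n),
    LinearIndependent ℝ e ∧ (∀ i, e i ∈ minimalVectors Λ) ∧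
      Λ' = Submodule.span ℤ (Set.range e)

/-- The quotient group `Λ/Λ'`. -/
abbrev quotLat {n : ℕ} (Λ Λ' : Submodule ℤ (EuclideanSpace ℝ (Fin n))) : Type :=
  Λ ⧸ (Submodule.comap Λ.subtype Λ')

/-- The index `[Λ : Λ']`. -/
def subIndex {n : ℕ} (Λ Λ' : Submodule ℤ (EuclideanSpace ℝ (Fin n))) : ℕ :=
  Nat.card (quotLat Λ Λ')

namespace MinkCon

def aa : ℝ := Real.sqrt (4/5)
def bb (n : ℕ) : ℝ := (Real.sqrt (4/5 + n/5) - aa) / n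
def ee (n : ℕ) (i : Fin n) : EuclideanSpace ℝ (Fin n) := WithLp.toLp 2 (fun k => (if k = i then aa else 0) + bb n)

lemma ha : aa^2 = 4/5 := Real.sq_sqrt (by norm_num)

lemma hb {n : ℕ} (hn : 0 < n) : (n:ℝ) * (bb n)^2 + 2 * aa * bb n = 1/5 := by
  have hn' : (n:ℝ) ≠ 0 := Nat.cast_ne_zero.mpr hn.ne'
  have h1 : (n:ℝ) * bb n = Real.sqrt (4/5 + n/5) - aa := by
    rw [bb]; field_simp
  have h2 : ((n:ℝ) * bb n + aa)^2 = 4/5 + n/5 := by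
    rw [h1, sub_add_cancel]; exact Real.sq_sqrt (by positivity)
  have h4 := ha
  have h3 : (n:ℝ) * ((n:ℝ)*(bb n)^2 + 2*aa*bb n) = (n:ℝ) * (1/5) := by
    linear_combination h2 - h4
  exact mul_left_cancel₀ hn' h3

lemma sum_apply {n : ℕ} (c : Fin n → ℝ) (k : Fin n) :
    (∑ i, c i • ee n i) k = aa * c k + bb n * ∑ i, c i := by
  have : (∑ i, c i • ee n i) k = ∑ i, c i * ee n i k := by
    rw [WithLp.ofLp_sum, Finset.sum_apply]; rfl
  rw [this]
  simp only [ee, mul_add]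
  rw [Finset.sum_add_distrib]
  congr 1
  · rw [Finset.sum_eq_single k]
    · simp [mul_comm]
    · intro b _ hb; simp [Ne.symm hb]
    · simp
  · rw [← Finset.sum_mul, mul_comm]

lemma inner_sum {n : ℕ} (hn : 0 < n) (c : Fin n → ℝ) :
    ⟪∑ i, c i • ee n i, ∑ i, c i • ee n i⟫ =
      (4/5) * (∑ i, (c i)^2) + (1/5) * (∑ i, c i)^2 := by
  set C := ∑ i, c i with hC
  have : ⟪∑ i, c i • ee n i, ∑ i, c i • ee n i⟫
      = ∑ k, (aa * c k + bb n * C) * (aa * c k + bb n * C) := by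
    rw [PiLp.inner_apply]
    refine Finset.sum_congr rfl fun k _ => ?_
    rw [sum_apply, RCLike.inner_apply, conj_trivial]
  rw [this]
  have expand : ∀ k : Fin n, (aa * c k + bb n * C) * (aa * c k + bb n * C)
      = aa^2 * (c k)^2 + (2*aa*(bb n)*C) * c k + (bb n)^2 * C^2 := by intro k; ring
  simp only [expand]
  rw [Finset.sum_add_distrib, Finset.sum_add_distrib, ← Finset.mul_sum, ← Finset.mul_sum,
    Finset.sum_const, Finset.card_univ, Fintype.card_fin]
  have h5 := hb hn
  have h4 := ha
  rw [← hC, nsmul_eq_mul]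
  linear_combination (∑ i, (c i)^2) * h4 + C^2 * h5


lemma int_one {n : ℕ} (hn : 6 ≤ n) (d : Fin n → ℤ) (h1 : ∀ i, ((d i : ZMod 3) = 1)) :
    45 ≤ 4 * (∑ i, (d i)^2) + (∑ i, d i)^2 := by
  have hpt : ∀ i, 1 ≤ (d i)^2 ∧ 0 ≤ (d i)^2 + d i - 2 := by
    intro i
    have hi := h1 i
    have h0 : d i ≠ 0 := by intro h; rw [h] at hi; exact absurd hi (by decide)
    have hm1 : d i ≠ -1 := by
      intro h; rw [h] at hi; rw [show ((-1 : ℤ) : ZMod 3) = 2 by decide] at hi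
      exact absurd hi (by decide)
    rcases lt_or_ge (d i) 0 with h | h
    · have : d i ≤ -2 := by omega
      constructor <;> nlinarith
    · have : 1 ≤ d i := by omega
      constructor <;> nlinarith
  set T := ∑ i, (d i)^2 with hT
  set s := ∑ i, d i with hs
  have hn' : (6 : ℤ) ≤ (n : ℤ) := by exact_mod_cast hn
  have hT1 : (n : ℤ) ≤ T := by
    calc (n:ℤ) = ∑ _i : Fin n, (1:ℤ) := by simp
    _ ≤ T := Finset.sum_le_sum fun i _ => (hpt i).1
  have hT2 : 2 * (n:ℤ) ≤ T + s := by
    have : ∑ _i : Fin n, (2:ℤ) ≤ ∑ i, ((d i)^2 + d i) :=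
      Finset.sum_le_sum fun i _ => by linarith [(hpt i).2]
    simpa [Finset.sum_add_distrib, ← hT, ← hs, mul_comm] using this
  have hs3 : ((s : ℤ) : ZMod 3) = (n : ZMod 3) := by
    rw [hs]
    push_cast
    rw [Finset.sum_congr rfl fun i _ => h1 i]
    simp [mul_comm]
  rcases le_or_gt 6 s with h6 | h6
  · nlinarith [sq_nonneg (s - 6)]
  · by_cases h2 : s = 2
    · have hn3 : ((n : ZMod 3)) = 2 := by rw [← hs3, h2]; decide
      have h8 : 8 ≤ n := by
        rcases (by omega : n = 6 ∨ n = 7 ∨ 8 ≤ n) with rfl | rfl | h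
        · exact absurd hn3 (by decide)
        · exact absurd hn3 (by decide)
        · exact h
      have h8' : (8:ℤ) ≤ (n:ℤ) := by exact_mod_cast h8
      nlinarith
    · have hfact : 0 ≤ (s - 1) * (s - 3) := by
        rcases le_or_gt s 1 with h | h
        · nlinarith
        · have : 3 ≤ s := by omega
          nlinarith
      nlinarith

lemma int_zero {n : ℕ} (hn : 6 ≤ n) (d : Fin n → ℤ) (h0 : ∀ i, ((d i : ZMod 3) = 0))
    (hd : d ≠ 0) : 45 ≤ 4 * (∑ i, (d i)^2) + (∑ i, d i)^2 := by
  have hdvd : ∀ i, ∃ m : ℤ, d i = 3 * m := by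
    intro i
    rcases (ZMod.intCast_zmod_eq_zero_iff_dvd (d i) 3).mp (h0 i) with ⟨m, hm⟩
    exact ⟨m, hm⟩
  choose f hf using hdvd
  have hsq : ∑ i, (d i)^2 = 9 * ∑ i, (f i)^2 := by
    rw [Finset.mul_sum]; exact Finset.sum_congr rfl fun i _ => by rw [hf i]; ring
  have hsum : ∑ i, d i = 3 * ∑ i, f i := by
    rw [Finset.mul_sum]; exact Finset.sum_congr rfl fun i _ => by rw [hf i]
  rw [hsq, hsum]
  set F2 := ∑ i, (f i)^2
  set F1 := ∑ i, f i with hF1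
  have hF2pos : 1 ≤ F2 := by
    obtain ⟨i, hi⟩ := Function.ne_iff.mp hd
    have hfi : f i ≠ 0 := by intro h; apply hi; simp [hf i, h]
    have : 1 ≤ (f i)^2 := by rcases hfi.lt_or_gt with h | h <;> nlinarith
    calc (1:ℤ) ≤ (f i)^2 := this
    _ ≤ F2 := Finset.single_le_sum (fun j _ => sq_nonneg (f j)) (Finset.mem_univ i)
  rcases eq_or_lt_of_le hF2pos with hF2 | hF2
  · -- F2 = 1, use parity: F1 odd
    have hev : Even (F2 - F1) := by
      have : F2 - F1 = ∑ i, ((f i)^2 - f i) := by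
        rw [Finset.sum_sub_distrib]
      rw [this]
      apply Finset.even_sum
      intro i _
      have : (f i)^2 - f i = (f i - 1) * (f i - 1 + 1) := by ring
      rw [this]
      exact Int.even_mul_succ_self (f i - 1)
    have hodd : F1 % 2 = 1 := by
      rcases hev with ⟨k, hk⟩
      omega
    have : F1 ≠ 0 := by omega
    have h1 : 1 ≤ F1^2 := by rcases this.lt_or_gt with h | h <;> nlinarith
    nlinarith
  · nlinarith [sq_nonneg F1]

lemma int_key {n : ℕ} (hn : 6 ≤ n) (d : Fin n → ℤ)
    (hcong : ∀ i j, ((d i : ZMod 3) = (d j : ZMod 3))) (hd : d ≠ 0) :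
    45 ≤ 4 * (∑ i, (d i)^2) + (∑ i, d i)^2 := by
  have i0 : Fin n := ⟨0, by omega⟩
  have htri : ∀ x : ZMod 3, x = 0 ∨ x = 1 ∨ x = 2 := by decide
  rcases htri ((d i0 : ZMod 3)) with h | h | h
  · exact int_zero hn d (fun i => (hcong i i0).trans h) hd
  · exact int_one hn d (fun i => (hcong i i0).trans h)
  · have h1 : ∀ i, (((-d i : ℤ) : ZMod 3) = 1) := by
      intro i
      push_cast
      rw [(hcong i i0).trans h]
      decide
    have := int_one hn (fun i => -(d i)) h1
    simp only [neg_sq, ← Finset.sum_neg_distrib] at this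
    simpa [neg_sq] using this

def vv (n : ℕ) : EuclideanSpace ℝ (Fin n) := (3⁻¹ : ℝ) • ∑ i, ee n i
def Lam (n : ℕ) : Submodule ℤ (EuclideanSpace ℝ (Fin n)) :=
  Submodule.span ℤ (insert (vv n) (Set.range (ee n)))
def Lam' (n : ℕ) : Submodule ℤ (EuclideanSpace ℝ (Fin n)) :=
  Submodule.span ℤ (Set.range (ee n))

/-- representation predicate -/
def Rep (n : ℕ) (x : EuclideanSpace ℝ (Fin n)) (d : Fin n → ℤ) : Prop :=
  (∀ i j, ((d i : ZMod 3) = (d j : ZMod 3))) ∧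
    x = (3⁻¹ : ℝ) • ∑ i, ((d i : ℝ)) • ee n i

lemma rep_of_mem {n : ℕ} {x : EuclideanSpace ℝ (Fin n)} (hx : x ∈ Lam n) :
    ∃ d, Rep n x d := by
  induction hx using Submodule.span_induction with
  | mem y hy =>
    rcases hy with rfl | ⟨j, rfl⟩
    · exact ⟨fun _ => 1, fun i j => rfl, by simp [vv]⟩
    · refine ⟨fun i => if i = j then 3 else 0, ?_, ?_⟩
      · intro i k
        by_cases hi : i = j <;> by_cases hk : k = j <;> simp [hi, hk] <;> decide
      · rw [Finset.sum_eq_single j (fun b _ hb => by simp [hb]) (by simp)]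
        norm_num [smul_smul]
  | zero => exact ⟨0, fun i j => rfl, by simp⟩
  | add y z _ _ hy hz =>
    obtain ⟨d, hd1, hd2⟩ := hy
    obtain ⟨d', hd1', hd2'⟩ := hz
    refine ⟨d + d', fun i j => ?_, ?_⟩
    · simp only [Pi.add_apply]
      push_cast
      rw [hd1 i j, hd1' i j]
    · rw [hd2, hd2', ← smul_add, ← Finset.sum_add_distrib]
      congr 1
      refine Finset.sum_congr rfl fun i _ => ?_
      simp only [Pi.add_apply]
      push_cast
      rw [add_smul]
  | smul z y _ hy =>
    obtain ⟨d, hd1, hd2⟩ := hy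
    refine ⟨z • d, fun i j => ?_, ?_⟩
    · simp only [Pi.smul_apply, smul_eq_mul]
      push_cast
      rw [hd1 i j]
    · rw [hd2, smul_comm]
      congr 1
      rw [Finset.smul_sum]
      refine Finset.sum_congr rfl fun i _ => ?_
      simp only [Pi.smul_apply, smul_eq_mul]
      push_cast
      rw [← smul_smul, ← Int.cast_smul_eq_zsmul ℝ z]

lemma rep_inner {n : ℕ} (hn : 0 < n) {x : EuclideanSpace ℝ (Fin n)} {d : Fin n → ℤ}
    (h : Rep n x d) :
    ⟪x, x⟫ = (((4 * (∑ i, (d i)^2) + (∑ i, d i)^2 : ℤ) : ℝ)) / 45 := by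
  rw [h.2, real_inner_smul_left, real_inner_smul_right,
    inner_sum hn (fun i => ((d i : ℝ)))]
  push_cast
  ring

lemma rep_ne {n : ℕ} {x : EuclideanSpace ℝ (Fin n)} {d : Fin n → ℤ}
    (h : Rep n x d) (hx : x ≠ 0) : d ≠ 0 := by
  intro h0
  apply hx
  rw [h.2, h0]
  simp

lemma one_le_inner {n : ℕ} (hn : 6 ≤ n) {x : EuclideanSpace ℝ (Fin n)}
    (hx : x ∈ Lam n) (hx0 : x ≠ 0) : 1 ≤ ⟪x, x⟫ := by
  obtain ⟨d, hd⟩ := rep_of_mem hx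
  rw [rep_inner (by omega) hd]
  have hkey := int_key hn d hd.1 (rep_ne hd hx0)
  have : (45 : ℝ) ≤ ((4 * (∑ i, (d i)^2) + (∑ i, d i)^2 : ℤ) : ℝ) := by exact_mod_cast hkey
  linarith

lemma ee_eq_sum {n : ℕ} (j : Fin n) :
    ee n j = ∑ i, (if i = j then (1:ℝ) else 0) • ee n i := by
  rw [Finset.sum_eq_single j]
  · simp
  · intro b _ hb; simp [hb]
  · simp

lemma inner_ee {n : ℕ} (hn : 0 < n) (j : Fin n) : ⟪ee n j, ee n j⟫ = 1 := by
  rw [ee_eq_sum j, inner_sum hn]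
  simp [Finset.sum_ite_eq']
  norm_num

lemma ee_ne_zero {n : ℕ} (hn : 0 < n) (j : Fin n) : ee n j ≠ 0 := by
  intro h
  have := inner_ee hn j
  rw [h, inner_zero_left] at this
  norm_num at this

lemma ee_mem_Lam {n : ℕ} (j : Fin n) : ee n j ∈ Lam n :=
  Submodule.subset_span (Set.mem_insert_of_mem _ ⟨j, rfl⟩)

lemma vv_mem_Lam {n : ℕ} : vv n ∈ Lam n :=
  Submodule.subset_span (Set.mem_insert _ _)

lemma latticeMin_Lam {n : ℕ} (hn : 6 ≤ n) : latticeMin (Lam n) = 1 := by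
  have hnn : 0 < n := by omega
  have hmem : (1:ℝ) ∈ {r : ℝ | ∃ x ∈ Lam n, x ≠ 0 ∧ ⟪x, x⟫ = r} :=
    ⟨ee n ⟨0, hnn⟩, ee_mem_Lam _, ee_ne_zero hnn _, inner_ee hnn _⟩
  have hlb : ∀ r ∈ {r : ℝ | ∃ x ∈ Lam n, x ≠ 0 ∧ ⟪x, x⟫ = r}, 1 ≤ r := by
    rintro r ⟨x, hx, hx0, rfl⟩
    exact one_le_inner hn hx hx0
  refine le_antisymm (csInf_le ⟨1, hlb⟩ hmem) (le_csInf ⟨1, hmem⟩ hlb)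

lemma lin_ind {n : ℕ} (hn : 0 < n) : LinearIndependent ℝ (ee n) := by
  rw [Fintype.linearIndependent_iff]
  intro c hc i
  have h0 : ⟪∑ i, c i • ee n i, ∑ i, c i • ee n i⟫ = 0 := by rw [hc]; simp
  rw [inner_sum hn] at h0
  have h1 : ∑ j, (c j)^2 ≤ 0 := by nlinarith [sq_nonneg (∑ j, c j), Finset.sum_nonneg (fun j (_ : j ∈ Finset.univ) => sq_nonneg (c j))]
  have h2 : (c i)^2 ≤ 0 := by
    have := Finset.single_le_sum (fun j (_ : j ∈ Finset.univ) => sq_nonneg (c j)) (Finset.mem_univ i)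
    linarith
  nlinarith [sq_nonneg (c i)]

lemma rep_add {n : ℕ} {x y : EuclideanSpace ℝ (Fin n)} {d d' : Fin n → ℤ}
    (hx : Rep n x d) (hy : Rep n y d') : Rep n (x + y) (d + d') := by
  constructor
  · intro i j
    simp only [Pi.add_apply]
    push_cast
    rw [hx.1 i j, hy.1 i j]
  · rw [hx.2, hy.2, ← smul_add, ← Finset.sum_add_distrib]
    congr 1
    refine Finset.sum_congr rfl fun i _ => ?_
    simp only [Pi.add_apply]
    push_cast
    rw [add_smul]

def bas {n : ℕ} (hn : 0 < n) : Module.Basis (Fin n) ℝ (EuclideanSpace ℝ (Fin n)) :=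
  haveI : Nonempty (Fin n) := ⟨⟨0, hn⟩⟩
  basisOfLinearIndependentOfCardEqFinrank (lin_ind hn) (by simp)

lemma bas_coe {n : ℕ} (hn : 0 < n) : ⇑(bas hn) = ee n := by
  haveI : Nonempty (Fin n) := ⟨⟨0, hn⟩⟩
  exact coe_basisOfLinearIndependentOfCardEqFinrank _ _

lemma rep_coord {n : ℕ} (hn : 0 < n) {x : EuclideanSpace ℝ (Fin n)} {d : Fin n → ℤ}
    (h : Rep n x d) : (bas hn).equivFun x = fun i => (d i : ℝ) / 3 := by
  have hs : (bas hn).equivFun.symm (fun i => (d i : ℝ) / 3) = x := by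
    rw [Module.Basis.equivFun_symm_apply, h.2, Finset.smul_sum]
    refine Finset.sum_congr rfl fun i _ => ?_
    rw [show (bas hn) i = ee n i by rw [← bas_coe hn], smul_smul]
    congr 1
    ring
  rw [← hs, LinearEquiv.apply_symm_apply]

def fZ {n : ℕ} (hn : 0 < n) (x : ↥(Lam n)) : ZMod 3 :=
  ((round ((3:ℝ) * (bas hn).equivFun x.1 ⟨0, hn⟩) : ℤ) : ZMod 3)

lemma fZ_rep {n : ℕ} (hn : 0 < n) (x : ↥(Lam n)) {d : Fin n → ℤ}
    (h : Rep n x.1 d) : fZ hn x = ((d ⟨0, hn⟩ : ZMod 3)) := by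
  unfold fZ
  rw [rep_coord hn h]
  rw [show (3:ℝ) * ((d ⟨0, hn⟩ : ℝ) / 3) = (d ⟨0, hn⟩ : ℝ) by ring, round_intCast]

def phi {n : ℕ} (hn : 0 < n) : ↥(Lam n) →+ ZMod 3 :=
  AddMonoidHom.mk' (fZ hn) (by
    intro x y
    obtain ⟨d, hd⟩ := rep_of_mem x.2
    obtain ⟨d', hd'⟩ := rep_of_mem y.2
    have hxy : Rep n ((x + y : ↥(Lam n)) : EuclideanSpace ℝ (Fin n)) (d + d') := rep_add hd hd'
    rw [fZ_rep hn _ hxy, fZ_rep hn _ hd, fZ_rep hn _ hd']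
    simp only [Pi.add_apply]
    push_cast
    ring)

lemma sum_zsmul_eq {n : ℕ} (m : Fin n → ℤ) :
    (3⁻¹:ℝ) • ∑ i, ((3 * m i : ℤ) : ℝ) • ee n i = ∑ i, m i • ee n i := by
  rw [Finset.smul_sum]
  refine Finset.sum_congr rfl fun i _ => ?_
  rw [← Int.cast_smul_eq_zsmul ℝ (m i), smul_smul]
  congr 1
  push_cast
  ring

lemma phi_vv {n : ℕ} (hn : 0 < n) : phi hn ⟨vv n, vv_mem_Lam⟩ = 1 := by
  have hrep : Rep n (vv n) (fun _ => 1) := ⟨fun i j => rfl, by simp [vv]⟩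
  have := fZ_rep hn ⟨vv n, vv_mem_Lam⟩ hrep
  exact this

lemma phi_surj {n : ℕ} (hn : 0 < n) : Function.Surjective (phi hn) := by
  intro t
  have htri : ∀ x : ZMod 3, x = 0 ∨ x = 1 ∨ x = 2 := by decide
  rcases htri t with rfl | rfl | rfl
  · exact ⟨0, map_zero _⟩
  · exact ⟨⟨vv n, vv_mem_Lam⟩, phi_vv hn⟩
  · refine ⟨⟨vv n, vv_mem_Lam⟩ + ⟨vv n, vv_mem_Lam⟩, ?_⟩
    rw [map_add, phi_vv hn]
    decide

lemma phi_ker {n : ℕ} (hn : 0 < n) (x : ↥(Lam n)) :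
    phi hn x = 0 ↔ x.1 ∈ Lam' n := by
  constructor
  · intro hx
    obtain ⟨d, hd⟩ := rep_of_mem x.2
    have h0 : ((d ⟨0, hn⟩ : ZMod 3)) = 0 := by
      rw [← fZ_rep hn x hd]; exact hx
    have hall : ∀ i, ∃ m : ℤ, d i = 3 * m := by
      intro i
      have : ((d i : ZMod 3)) = 0 := (hd.1 i ⟨0, hn⟩).trans h0
      rcases (ZMod.intCast_zmod_eq_zero_iff_dvd (d i) 3).mp this with ⟨m, hm⟩
      exact ⟨m, hm⟩
    choose m hm using hall
    have : x.1 = ∑ i, m i • ee n i := by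
      rw [hd.2, ← sum_zsmul_eq m]
      congr 1
      refine Finset.sum_congr rfl fun i _ => ?_
      rw [← hm i]
    rw [this]
    exact Submodule.sum_mem _ fun i _ =>
      Submodule.smul_mem _ _ (Submodule.subset_span ⟨i, rfl⟩)
  · intro hx
    obtain ⟨c, hc⟩ := Submodule.mem_span_range_iff_exists_fun ℤ |>.mp hx
    have hrep : Rep n x.1 (fun i => 3 * c i) := by
      constructor
      · intro i j
        push_cast
        rw [show ((3:ZMod 3)) = 0 by decide]
        ring
      · rw [← hc, ← sum_zsmul_eq c]
    show fZ hn x = 0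
    rw [fZ_rep hn x hrep]
    push_cast
    rw [show ((3:ZMod 3)) = 0 by decide]
    ring

lemma quot_equiv {n : ℕ} (hn : 0 < n) :
    Nonempty ((↥(Lam n) ⧸ (Submodule.comap (Lam n).subtype (Lam' n))) ≃+ ZMod 3) := by
  have hker : Submodule.comap (Lam n).subtype (Lam' n)
      = LinearMap.ker (phi hn).toIntLinearMap := by
    ext x
    rw [Submodule.mem_comap, LinearMap.mem_ker]
    exact (phi_ker hn x).symm
  exact ⟨((Submodule.quotEquivOfEq _ _ hker).trans
    ((phi hn).toIntLinearMap.quotKerEquivOfSurjective (phi_surj hn))).toAddEquiv⟩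

lemma lam_discrete {n : ℕ} (hn : 6 ≤ n) : DiscreteTopology ↥(Lam n) := by
  rw [discreteTopology_iff_isOpen_singleton_zero]
  have h : ({0} : Set ↥(Lam n)) =
      (fun x : ↥(Lam n) => (x : EuclideanSpace ℝ (Fin n))) ⁻¹' Metric.ball 0 1 := by
    ext x
    simp only [Set.mem_singleton_iff, Set.mem_preimage, Metric.mem_ball, dist_zero_right]
    constructor
    · rintro rfl; simp
    · intro hx
      by_contra h0
      have hne : x.1 ≠ 0 := fun hh => h0 (Subtype.ext hh)
      have h1 : (1:ℝ) ≤ ⟪x.1, x.1⟫ := one_le_inner hn x.2 hne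
      rw [real_inner_self_eq_norm_sq] at h1
      nlinarith [norm_nonneg x.1]
  rw [h]
  exact Metric.isOpen_ball.preimage continuous_subtype_val

lemma lam_span {n : ℕ} (hn : 6 ≤ n) :
    Submodule.span ℝ ((Lam n : Set (EuclideanSpace ℝ (Fin n)))) = ⊤ := by
  have hnn : 0 < n := by omega
  have h1 : Submodule.span ℝ (Set.range (ee n)) = ⊤ := by
    have := (bas hnn).span_eq
    rwa [bas_coe hnn] at this
  rw [eq_top_iff, ← h1]
  exact Submodule.span_mono (by rintro y ⟨i, rfl⟩; exact ee_mem_Lam i)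


end MinkCon

set_option maxHeartbeats 1600000 in
theorem forward_dir {n : ℕ} (Λ Λ' : Submodule ℤ (EuclideanSpace ℝ (Fin n)))
    (hmink : IsMinkowskian Λ Λ') (hq : Nonempty (quotLat Λ Λ' ≃+ ZMod 3)) : 6 ≤ n := by
  by_contra hlt
  push_neg at hlt
  have hn5 : n ≤ 5 := by omega
  obtain ⟨e, _he_li, he_min, hΛ'⟩ := hmink
  obtain ⟨ψ⟩ := hq
  -- a nonzero element of the quotient killed by 3
  set q : quotLat Λ Λ' := ψ.symm 1 with hqdef
  have hq1 : ψ q = 1 := ψ.apply_symm_apply 1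
  have hq0 : q ≠ 0 := by
    intro h
    rw [h, map_zero] at hq1
    exact absurd hq1 (by decide)
  have h3q : (3:ℤ) • q = 0 := by
    apply ψ.injective
    rw [map_zsmul, hq1, map_zero]
    decide
  obtain ⟨xb, hxb⟩ := Submodule.Quotient.mk_surjective _ q
  have hxnot : xb.1 ∉ Λ' := by
    intro h
    apply hq0
    rw [← hxb, Submodule.Quotient.mk_eq_zero]
    exact h
  have h3x : (3:ℤ) • xb.1 ∈ Λ' := by
    have : ((3:ℤ) • xb : ↥Λ) ∈ Submodule.comap Λ.subtype Λ' := by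
      rw [← Submodule.Quotient.mk_eq_zero, Submodule.Quotient.mk_smul, hxb]
      exact h3q
    simpa using this
  set x := xb.1 with hxdef
  have hxΛ : x ∈ Λ := xb.2
  -- coefficients
  rw [hΛ'] at h3x hxnot
  obtain ⟨c, hc⟩ := (Submodule.mem_span_range_iff_exists_fun ℤ).mp h3x
  -- balanced residues
  set r : Fin n → ℤ := fun i => if c i % 3 = 2 then -1 else c i % 3 with hrdef
  set g : Fin n → ℤ := fun i => (c i - r i) / 3 with hgdef
  have hcg : ∀ i, c i = 3 * g i + r i := by
    intro i
    simp only [hrdef, hgdef]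
    split <;> omega
  have hr1 : ∀ i, r i = -1 ∨ r i = 0 ∨ r i = 1 := by
    intro i
    simp only [hrdef]
    split <;> omega
  set x' := x - ∑ i, g i • e i with hx'def
  have hgmem : ∑ i, g i • e i ∈ Submodule.span ℤ (Set.range e) :=
    Submodule.sum_mem _ fun i _ => Submodule.smul_mem _ _ (Submodule.subset_span ⟨i, rfl⟩)
  have hx'Λ : x' ∈ Λ := by
    apply Submodule.sub_mem _ hxΛ
    exact Submodule.sum_mem _ fun i _ => Submodule.smul_mem _ _ (he_min i).1
  have hx'not : x' ∉ Submodule.span ℤ (Set.range e) := by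
    intro h
    apply hxnot
    have : x = x' + ∑ i, g i • e i := by rw [hx'def]; abel
    rw [this]
    exact Submodule.add_mem _ h hgmem
  have hx'0 : x' ≠ 0 := by
    intro h
    exact hx'not (h ▸ Submodule.zero_mem _)
  have h3x' : (3:ℤ) • x' = ∑ i, r i • e i := by
    rw [hx'def, smul_sub]
    rw [show (3:ℤ) • ∑ i, g i • e i = ∑ i, (3 * g i) • e i by
      rw [Finset.smul_sum]; exact Finset.sum_congr rfl fun i _ => (smul_smul _ _ _)]
    rw [← hc, ← Finset.sum_sub_distrib]
    refine Finset.sum_congr rfl fun i _ => ?_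
    rw [← sub_smul]
    congr 1
    have := hcg i
    omega
  -- the real vector s = 3 x'
  set s : EuclideanSpace ℝ (Fin n) := (3:ℝ) • x' with hsdef
  have hs_sum : s = ∑ i, (r i : ℝ) • e i := by
    rw [hsdef, show (3:ℝ) = ((3:ℤ):ℝ) by norm_num, Int.cast_smul_eq_zsmul, h3x']
    exact Finset.sum_congr rfl fun i _ => (Int.cast_smul_eq_zsmul ℝ (r i) (e i)).symm
  have hs0 : s ≠ 0 := by
    rw [hsdef]
    exact smul_ne_zero (by norm_num) hx'0
  have hN : 0 < ⟪s, s⟫ :=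
    real_inner_self_nonneg.lt_of_ne (fun h => hs0 (inner_self_eq_zero.mp h.symm))
  set m := latticeMin Λ with hmdef
  have hlow : ∀ y, y ∈ Λ → y ≠ 0 → m ≤ ⟪y, y⟫ := by
    intro y hy hy0
    apply csInf_le
    · exact ⟨0, by rintro t ⟨z, _, _, rfl⟩; exact real_inner_self_nonneg⟩
    · exact ⟨y, hy, hy0, rfl⟩
  -- key per-index inequality
  have key : ∀ j, r j ≠ 0 → 6 * (r j : ℝ) * ⟪s, e j⟫ ≤ ⟪s, s⟫ := by
    intro j hj
    have hrj2 : ((r j : ℝ))^2 = 1 := by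
      rcases hr1 j with h | h | h <;> simp [h] at hj ⊢ <;> norm_num
    set y := x' - (r j : ℤ) • e j with hydef
    have hyΛ : y ∈ Λ := Submodule.sub_mem _ hx'Λ (Submodule.smul_mem _ _ (he_min j).1)
    have hy0 : y ≠ 0 := by
      intro h
      apply hx'not
      have : x' = (r j : ℤ) • e j := by
        have := sub_eq_zero.mp h
        exact this
      rw [this]
      exact Submodule.smul_mem _ _ (Submodule.subset_span ⟨j, rfl⟩)
    have hym : m ≤ ⟪y, y⟫ := hlow y hyΛ hy0
    have h3y : (3:ℝ) • y = s - (3 * (r j : ℝ)) • e j := by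
      rw [hydef, smul_sub, ← hsdef]
      congr 1
      rw [show ((r j : ℤ) • e j : EuclideanSpace ℝ (Fin n)) = (r j : ℝ) • e j from
        (Int.cast_smul_eq_zsmul ℝ (r j) (e j)).symm]
      rw [smul_smul]
    have hexp : ⟪(3:ℝ) • y, (3:ℝ) • y⟫
        = ⟪s, s⟫ - 2 * (3 * (r j : ℝ)) * ⟪s, e j⟫ + (3 * (r j : ℝ))^2 * ⟪e j, e j⟫ := by
      rw [h3y, real_inner_sub_sub_self]
      simp only [real_inner_smul_left, real_inner_smul_right]
      ring
    have h9 : ⟪(3:ℝ) • y, (3:ℝ) • y⟫ = 9 * ⟪y, y⟫ := by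
      rw [real_inner_smul_left, real_inner_smul_right]
      ring
    have hem : ⟪e j, e j⟫ = m := (he_min j).2.2
    have hr9 : (3 * (r j : ℝ))^2 = 9 := by rw [mul_pow, hrj2]; norm_num
    have h3 := hexp
    rw [h9, hem, hr9] at h3
    linarith [hym, h3.ge, h3.le]
  -- sum the inequality
  have hsum_inner : ∑ j, (r j : ℝ) * ⟪s, e j⟫ = ⟪s, s⟫ := by
    have h1 : ⟪s, ∑ i, (r i : ℝ) • e i⟫ = ∑ j, (r j : ℝ) * ⟪s, e j⟫ := by
      rw [inner_sum]
      exact Finset.sum_congr rfl fun j _ => real_inner_smul_right _ _ _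
    rw [← h1]
    congr 1
    exact hs_sum.symm
  set S := Finset.univ.filter (fun j => r j ≠ 0) with hSdef
  have hcard : (S.card : ℝ) ≤ 5 := by
    have h1 : S.card ≤ n := le_trans (Finset.card_filter_le _ _) (by simp)
    have : S.card ≤ 5 := le_trans h1 hn5
    exact_mod_cast this
  have hfil : ∑ j ∈ S, (r j : ℝ) * ⟪s, e j⟫ = ∑ j, (r j : ℝ) * ⟪s, e j⟫ := by
    apply Finset.sum_filter_of_ne
    intro j _ hne
    intro h0
    apply hne
    rw [h0]
    simp
  have hsum_le : 6 * ⟪s, s⟫ ≤ (S.card : ℝ) * ⟪s, s⟫ := by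
    have : ∑ j ∈ S, 6 * (r j : ℝ) * ⟪s, e j⟫ ≤ ∑ _j ∈ S, ⟪s, s⟫ := by
      apply Finset.sum_le_sum
      intro j hj
      exact key j (by simpa [hSdef] using hj)
    rw [Finset.sum_const, nsmul_eq_mul] at this
    calc 6 * ⟪s, s⟫ = ∑ j ∈ S, 6 * (r j : ℝ) * ⟪s, e j⟫ := by
          rw [← hsum_inner, ← hfil, Finset.mul_sum]
          exact Finset.sum_congr rfl fun j _ => by ring
      _ ≤ (S.card : ℝ) * ⟪s, s⟫ := this
  nlinarith [hsum_le, hcard, hN]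


/-- There exists a lattice `Λ` in `ℝⁿ` possessing a Minkowskian sublattice `Λ'`
with `Λ/Λ'` cyclic of order `3` if and only if `n ≥ 6`. -/
theorem exists_minkowskian_cyclic_three_iff (n : ℕ) :
    (∃ Λ Λ' : Submodule ℤ (EuclideanSpace ℝ (Fin n)),
      IsLattice Λ ∧ IsMinkowskian Λ Λ' ∧
        Nonempty (quotLat Λ Λ' ≃+ ZMod 3)) ↔ 6 ≤ n := by
  constructor
  · rintro ⟨Λ, Λ', _, hmink, hq⟩
    exact forward_dir Λ Λ' hmink hq
  · intro hn
    have hnn : 0 < n := by omega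
    refine ⟨MinkCon.Lam n, MinkCon.Lam' n,
      ⟨MinkCon.lam_discrete hn, MinkCon.lam_span hn⟩,
      ⟨MinkCon.ee n, MinkCon.lin_ind hnn, fun i =>
        ⟨MinkCon.ee_mem_Lam i, MinkCon.ee_ne_zero hnn i,
          (MinkCon.inner_ee hnn i).trans (MinkCon.latticeMin_Lam hn).symm⟩, rfl⟩,
      MinkCon.quot_equiv hnn⟩
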